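/- arXiv:2307.10535 — 8 statements merged into one kernel-verified Lean document; each statement's English description precedes it below -/
import Mathlib

section
/- Let (G,·,▷,Φ) be a twisted post group with sub-adjacent operation ∘ defined by a∘b = Φ(a)·(a▷b). Then the sub-adjacent operation ∘ is associative, i.e., (G,∘) is a semigroup. -/
/-- A (left) twisted post group: a group `G` with a binary operation `tri` (written `▷`)
and a cocycle `phi` such that each left multiplication `tri a` is a group automorphism,
`(a ∘ b) ▷ c = a ▷ (b ▷ c)` and `Φ(a ∘ b) = a ∘ Φ(b)`, where `a ∘ b = Φ(a)·(a ▷ b)`. -/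
structure TPG (G : Type*) [Group G] where
  tri : G → G → G
  phi : G → G
  tri_mul : ∀ a b c : G, tri a (b * c) = tri a b * tri a c
  tri_bij : ∀ a : G, Function.Bijective (tri a)
  tri_assoc : ∀ a b c : G, tri (phi a * tri a b) c = tri a (tri b c)
  phi_comp : ∀ a b : G, phi (phi a * tri a b) = phi a * tri a (phi b)

namespace TPG

variable {G : Type*} [Group G] (T : TPG G)

/-- The sub-adjacent operation `a ∘ b = Φ(a)·(a ▷ b)`. -/
def circ (a b : G) : G := T.phi a * T.tri a b

/-- `e_a = (L_a^▷)⁻¹(Φ(a)⁻¹·a)`. -/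
noncomputable def e (a : G) : G := Function.invFun (T.tri a) ((T.phi a)⁻¹ * a)

/-- `a† = (L_a^▷)⁻¹(Φ(a)⁻¹·e_a)`. -/
noncomputable def dag (a : G) : G := Function.invFun (T.tri a) ((T.phi a)⁻¹ * T.e a)

end TPG

/-- The sub-adjacent operation of a twisted post group is associative. -/
theorem circ_assoc {G : Type*} [Group G] (T : TPG G) :
    ∀ a b c : G, T.circ (T.circ a b) c = T.circ a (T.circ b c) := by
  intro a b c
  calc T.circ (T.circ a b) c
      = T.phi (T.circ a b) * T.tri (T.circ a b) c := rfl
    _ = T.phi a * T.tri a (T.phi b) * T.tri a (T.tri b c) := by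
        rw [TPG.circ, T.phi_comp, T.tri_assoc]
    _ = T.phi a * T.tri a (T.phi b * T.tri b c) := by rw [T.tri_mul, mul_assoc]
    _ = T.circ a (T.circ b c) := rfl
end

section
/- Let (G,·,▷,Φ) be a twisted post group with sub-adjacent operation ∘. For a∈G define e_a = (L_a^▷)^{-1}(Φ(a)^{-1}·a). Then a∘e_a = a and Φ(e_a) = 1, where 1 is the identity of (G,·). -/
namespace TPG

variable {G : Type*} [Group G] (T : TPG G)

theorem tri_one (a : G) : T.tri a 1 = 1 :=
  (MonoidHom.mk' (T.tri a) (T.tri_mul a)).map_one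

theorem tri_eq_one_iff (a b : G) : T.tri a b = 1 ↔ b = 1 :=
  (T.tri_bij a).injective.eq_iff' (T.tri_one a)

theorem phi_circ (a b : G) : T.phi (T.circ a b) = T.circ a (T.phi b) :=
  T.phi_comp a b

theorem tri_e (a : G) : T.tri a (T.e a) = (T.phi a)⁻¹ * a :=
  Function.invFun_eq ((T.tri_bij a).surjective _)

theorem circ_e (a : G) : T.circ a (T.e a) = a := by
  rw [circ, tri_e, mul_inv_cancel_left]

-- `Φ(a) = Φ(a ∘ e_a) = Φ(a) · (a ▷ Φ(e_a))`, and `a ▷ -` is injective.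
theorem phi_e (a : G) : T.phi (T.e a) = 1 := by
  have h := T.phi_circ a (T.e a)
  rwa [circ_e, circ, eq_comm, mul_eq_left, tri_eq_one_iff] at h

end TPG

/-- For every `a`, `a ∘ e_a = a` and `Φ(e_a) = 1`. -/
theorem circ_e_self {G : Type*} [Group G] (T : TPG G) (a : G) :
    T.circ a (T.e a) = a ∧ T.phi (T.e a) = 1 :=
  ⟨T.circ_e a, T.phi_e a⟩
end

section
/- Let (G,·,▷,Φ) be a twisted post group with sub-adjacent operation ∘, and let e_a = (L_a^▷)^{-1}(Φ(a)^{-1}·a). Then for all a,b ∈ G, e_a ▷ b = b and e_a ∘ b = b. -/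
namespace TPG

variable {G : Type*} [Group G] (T : TPG G)

theorem tri_circ (a b c : G) : T.tri (T.circ a b) c = T.tri a (T.tri b c) :=
  T.tri_assoc a b c

variable {T}

theorem tri_eq_self_of_circ_eq {a x : G} (h : T.circ a x = a) (c : G) : T.tri x c = c :=
  (T.tri_bij a).1 (by rw [← T.tri_circ, h])

theorem phi_eq_one_of_circ_eq {a x : G} (h : T.circ a x = a) : T.phi x = 1 := by
  have hphi : T.phi a * T.tri a (T.phi x) = T.phi a * 1 := by
    rw [mul_one, ← circ, ← phi_circ, h]
  exact (T.tri_bij a).1 ((mul_left_cancel hphi).trans (T.tri_one a).symm)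

theorem circ_eq_self_of_circ_eq {a x : G} (h : T.circ a x = a) (c : G) : T.circ x c = c := by
  rw [circ, phi_eq_one_of_circ_eq h, one_mul, tri_eq_self_of_circ_eq h]

end TPG

/-- For all `a b`, `e_a ▷ b = b` and `e_a ∘ b = b`. -/
theorem e_tri_circ {G : Type*} [Group G] (T : TPG G) (a b : G) :
    T.tri (T.e a) b = b ∧ T.circ (T.e a) b = b :=
  ⟨TPG.tri_eq_self_of_circ_eq (T.circ_e a) b, TPG.circ_eq_self_of_circ_eq (T.circ_e a) b⟩
end

section
/- Let (G,·,▷,Φ) be a twisted post group with sub-adjacent operation ∘. For a∈G, let G_a = {b∘e_a | b∈G}, where e_a = (L_a^▷)^{-1}(Φ(a)^{-1}·a). Then G_a is closed under ∘ and (G_a, ∘) is a group with identity e_a. -/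
namespace TPG

variable {G : Type*} [Group G] (T : TPG G)

theorem circ_assoc (a b c : G) : T.circ (T.circ a b) c = T.circ a (T.circ b c) := by
  simp only [circ, T.phi_comp, T.tri_assoc, T.tri_mul, mul_assoc]

theorem circ_injective (a : G) : Function.Injective (T.circ a) :=
  fun _ _ h => (T.tri_bij a).1 (mul_left_cancel h)

theorem circ_surjective (a : G) : Function.Surjective (T.circ a) := by
  intro z
  obtain ⟨y, hy⟩ := (T.tri_bij a).2 ((T.phi a)⁻¹ * z)
  exact ⟨y, by rw [circ, hy, mul_inv_cancel_left]⟩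

theorem e_circ (a x : G) : T.circ (T.e a) x = x :=
  T.circ_injective a (by rw [← circ_assoc, circ_e])

theorem exists_eq_circ_e_iff {a x : G} : (∃ b, x = T.circ b (T.e a)) ↔ T.circ x (T.e a) = x :=
  ⟨fun ⟨b, hb⟩ => by rw [hb, circ_assoc, e_circ], fun hx => ⟨x, hx.symm⟩⟩

theorem circ_e_eq_self_of_circ_eq_e {a x y : G} (hy : T.circ x y = T.e a) :
    T.circ y (T.e a) = y :=
  T.circ_injective x (by rw [← circ_assoc, hy, e_circ])

theorem circ_eq_e_of_circ_eq_e {a x y : G} (hx : T.circ x (T.e a) = x)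
    (hy : T.circ x y = T.e a) : T.circ y x = T.e a :=
  T.circ_injective x (by rw [← circ_assoc, hy, e_circ, hx])

end TPG

/-- `G_a = {b ∘ e_a | b ∈ G}` is closed under `∘` and `(G_a, ∘)` is a group
with identity `e_a`. -/
theorem Ga_group {G : Type*} [Group G] (T : TPG G) (a : G) :
    (∀ x ∈ {x : G | ∃ b : G, x = T.circ b (T.e a)},
      ∀ y ∈ {x : G | ∃ b : G, x = T.circ b (T.e a)},
        T.circ x y ∈ {x : G | ∃ b : G, x = T.circ b (T.e a)}) ∧
    T.e a ∈ {x : G | ∃ b : G, x = T.circ b (T.e a)} ∧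
    (∀ x ∈ {x : G | ∃ b : G, x = T.circ b (T.e a)},
      T.circ x (T.e a) = x ∧ T.circ (T.e a) x = x) ∧
    (∀ x ∈ {x : G | ∃ b : G, x = T.circ b (T.e a)},
      ∃ y ∈ {x : G | ∃ b : G, x = T.circ b (T.e a)},
        T.circ x y = T.e a ∧ T.circ y x = T.e a) := by
  simp only [Set.mem_ofPred_eq, T.exists_eq_circ_e_iff]
  refine ⟨fun x _ y hy => ?_, T.e_circ a _, fun x hx => ⟨hx, T.e_circ a x⟩, fun x hx => ?_⟩
  · rw [T.circ_assoc, hy]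
  · obtain ⟨y, hy⟩ := T.circ_surjective x (T.e a)
    exact ⟨y, T.circ_e_eq_self_of_circ_eq_e hy, hy, T.circ_eq_e_of_circ_eq_e hx hy⟩
end

section
/- Let (G,·) be a group and let B_1, B_2: G→G satisfy B_1(a)B_1(b) = B_1(B_1(a)·b·B_2(a)) and B_2(b)B_2(a) = B_2(B_1(a)·b·B_2(a)) for all a,b. Define a▷b = B_2(a)^{-1}·b·B_2(a) and Φ(a) = B_1(a)·B_2(a). Then (G,·,▷,Φ) is a twisted post group. -/
/-!
Conjugation by `B₂ a` turns `a ∘ b = Φ(a)·(a ▷ b)` into `B₁(a)·b·B₂(a)`. The first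
Rota–Baxter axiom then says that `B₁` maps `∘` to `·`, the second that `B₂` maps `∘` to the
opposite product; the latter makes `a ↦ (a ▷ ·)` multiplicative, and together they make
`Φ = B₁·B₂` satisfy `Φ(a ∘ b) = a ∘ Φ(b)`.
-/

namespace TPG

variable {G : Type*} [Group G] (B₁ B₂ : G → G)

theorem rotaBaxter_circ_eq (a b : G) :
    B₁ a * B₂ a * ((B₂ a)⁻¹ * b * B₂ a) = B₁ a * b * B₂ a := by
  group

theorem rotaBaxter_tri_assoc (h2 : ∀ a b : G, B₂ b * B₂ a = B₂ (B₁ a * b * B₂ a)) (a b c : G) :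
    (B₂ (B₁ a * b * B₂ a))⁻¹ * c * B₂ (B₁ a * b * B₂ a) =
      (B₂ a)⁻¹ * ((B₂ b)⁻¹ * c * B₂ b) * B₂ a := by
  rw [← h2]
  group

theorem rotaBaxter_phi_comp (h1 : ∀ a b : G, B₁ a * B₁ b = B₁ (B₁ a * b * B₂ a))
    (h2 : ∀ a b : G, B₂ b * B₂ a = B₂ (B₁ a * b * B₂ a)) (a b : G) :
    B₁ (B₁ a * b * B₂ a) * B₂ (B₁ a * b * B₂ a) =
      B₁ a * B₂ a * ((B₂ a)⁻¹ * (B₁ b * B₂ b) * B₂ a) := by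
  rw [← h1, ← h2]
  group

def ofRotaBaxterSystem (h1 : ∀ a b : G, B₁ a * B₁ b = B₁ (B₁ a * b * B₂ a))
    (h2 : ∀ a b : G, B₂ b * B₂ a = B₂ (B₁ a * b * B₂ a)) : TPG G where
  tri a b := (B₂ a)⁻¹ * b * B₂ a
  phi a := B₁ a * B₂ a
  tri_mul a b c := by group
  tri_bij a := by
    convert (MulAut.conj (B₂ a)⁻¹).bijective using 1
    ext b
    rw [MulAut.conj_apply, inv_inv]
  tri_assoc a b c := by
    simpa only [rotaBaxter_circ_eq] using rotaBaxter_tri_assoc B₁ B₂ h2 a b c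
  phi_comp a b := by
    simpa only [rotaBaxter_circ_eq] using rotaBaxter_phi_comp B₁ B₂ h1 h2 a b

end TPG

/-- Every Rota-Baxter system of groups gives a twisted post group via
conjugation by `B₂` and cocycle `Φ(a) = B₁(a)·B₂(a)`. -/
theorem rotaBaxterSystem_toTPG {G : Type*} [Group G] (B₁ B₂ : G → G)
    (h1 : ∀ a b : G, B₁ a * B₁ b = B₁ (B₁ a * b * B₂ a))
    (h2 : ∀ a b : G, B₂ b * B₂ a = B₂ (B₁ a * b * B₂ a)) :
    ∃ T : TPG G, (∀ a b : G, T.tri a b = (B₂ a)⁻¹ * b * B₂ a) ∧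
      (∀ a : G, T.phi a = B₁ a * B₂ a) :=
  ⟨TPG.ofRotaBaxterSystem B₁ B₂ h1 h2, fun _ _ => rfl, fun _ => rfl⟩
end

section
/- Let (G,·,▷,Φ) be a weak twisted post group and define a∘b = Φ(a)·(a▷b). Then (G,·,∘,Φ) is a skew truss: (G,∘) is a semigroup and a∘(b·c) = (a∘b)·Φ(a)^{-1}·(a∘c) for all a,b,c. -/
/-- A weak twisted post group: each left multiplication is only required to be a
group endomorphism of `(G, ·)`. -/
structure WTPG (G : Type*) [Group G] where
  tri : G → G → G
  phi : G → G
  tri_mul : ∀ a b c : G, tri a (b * c) = tri a b * tri a c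
  tri_assoc : ∀ a b c : G, tri (phi a * tri a b) c = tri a (tri b c)
  phi_comp : ∀ a b : G, phi (phi a * tri a b) = phi a * tri a (phi b)

namespace WTPG
variable {G : Type*} [Group G] (T : WTPG G)
/-- The sub-adjacent operation. -/
def circ (a b : G) : G := T.phi a * T.tri a b
end WTPG

/-!
Both identities come from `b ↦ a ▷ b` being multiplicative: `a ∘ (b·c) = (a ∘ b)·(a ▷ c)`
gives distributivity, and for associativity the axioms for `Φ` and `▷` rewrite `(a ∘ b) ∘ c`
as `Φ(a)·(a ▷ Φ(b))·(a ▷ (b ▷ c)) = Φ(a)·(a ▷ (b ∘ c))`.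
-/

namespace WTPG

variable {G : Type*} [Group G] (T : WTPG G)

theorem phi_circ (a b : G) : T.phi (T.circ a b) = T.circ a (T.phi b) :=
  T.phi_comp a b

theorem tri_circ (a b c : G) : T.tri (T.circ a b) c = T.tri a (T.tri b c) :=
  T.tri_assoc a b c

theorem circ_mul (a b c : G) : T.circ a (b * c) = T.circ a b * T.tri a c := by
  rw [circ, circ, T.tri_mul, mul_assoc]

theorem circ_assoc (a b c : G) : T.circ (T.circ a b) c = T.circ a (T.circ b c) := by
  calc T.circ (T.circ a b) c
      = T.circ a (T.phi b) * T.tri a (T.tri b c) := by rw [circ, phi_circ, tri_circ]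
    _ = T.circ a (T.phi b * T.tri b c) := (T.circ_mul a _ _).symm

theorem circ_mul_eq_circ_mul_inv_phi_mul_circ (a b c : G) :
    T.circ a (b * c) = T.circ a b * (T.phi a)⁻¹ * T.circ a c := by
  rw [circ_mul, mul_assoc, show T.circ a c = T.phi a * T.tri a c from rfl,
    inv_mul_cancel_left]

end WTPG

/-- The sub-adjacent structure of a weak twisted post group is a skew truss:
`∘` is associative and `a ∘ (b·c) = (a ∘ b)·Φ(a)⁻¹·(a ∘ c)`. -/
theorem wtpg_to_skewTruss {G : Type*} [Group G] (T : WTPG G) :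
    (∀ a b c : G, T.circ (T.circ a b) c = T.circ a (T.circ b c)) ∧
    (∀ a b c : G, T.circ a (b * c) = T.circ a b * (T.phi a)⁻¹ * T.circ a c) :=
  ⟨T.circ_assoc, T.circ_mul_eq_circ_mul_inv_phi_mul_circ⟩
end

section
/- Let (G,·,▷,Φ) be a twisted post group such that Φ is idempotent. Then Φ(a)▷b = a▷b for all a,b ∈ G. -/
/-! `Φ(Φ(1)) = Φ(1)` together with `Φ(1 ∘ 1) = 1 ∘ Φ(1)` forces `Φ(1) = 1`, so
`1 ▷ -` is the identity, and `(a ∘ 1) ▷ b = a ▷ (1 ▷ b)` reads `Φ(a) ▷ b = a ▷ b`. -/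

namespace TPG

variable {G : Type*} [Group G] (T : TPG G)

theorem phi_one_of_phi_phi_one (h : T.phi (T.phi 1) = T.phi 1) : T.phi 1 = 1 := by
  have hcomp := T.phi_comp 1 1
  rw [T.tri_one, mul_one, h, left_eq_mul] at hcomp
  exact (T.tri_bij 1).injective (hcomp.trans (T.tri_one 1).symm)

variable {T}

theorem one_tri (h : T.phi 1 = 1) (c : G) : T.tri 1 c = c := by
  have hassoc := T.tri_assoc 1 1 c
  rw [T.tri_one, mul_one, h] at hassoc
  exact (T.tri_bij 1).injective hassoc.symm

theorem phi_tri_of_phi_one (h : T.phi 1 = 1) (a b : G) : T.tri (T.phi a) b = T.tri a b := by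
  simpa only [T.tri_one, mul_one, one_tri h] using T.tri_assoc a 1 b

end TPG

/-- If the cocycle of a twisted post group is idempotent, then `Φ(a) ▷ b = a ▷ b`. -/
theorem phi_tri {G : Type*} [Group G] (T : TPG G)
    (hid : ∀ a : G, T.phi (T.phi a) = T.phi a) :
    ∀ a b : G, T.tri (T.phi a) b = T.tri a b :=
  TPG.phi_tri_of_phi_one (T.phi_one_of_phi_phi_one (hid 1))
end

section
/- Let (G,+,▷,◁,Φ) be an abelian two-sided weak twisted post group with sub-adjacent operation ∘. Then (G,+,∘) is a nonunital (not necessarily unital, associative) ring if and only if Φ is the trivial map Φ(a) = 0 for all a∈G. -/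
/-! Since each `a ▷ ·` is additive, `a ▷ 0 = 0`, so `a ∘ 0 = Φ(a)`; left distributivity of `∘`
at `b = c = 0` forces `a ∘ 0 = 0`. Conversely, if `Φ = 0` then `∘ = ▷ = ◁`, and the post-group
axioms of `▷` and `◁` are literally associativity and the two distributive laws of `∘`. -/

theorem phi_eq_zero_of_circ_left_distrib {G : Type*} [AddLeftCancelMonoid G]
    {tri : G → G → G} {phi : G → G} {circ : G → G → G}
    (hcircL : ∀ a b : G, circ a b = phi a + tri a b)
    (hL1 : ∀ a b c : G, tri a (b + c) = tri a b + tri a c)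
    (hdistrib : ∀ a b c : G, circ a (b + c) = circ a b + circ a c) (a : G) :
    phi a = 0 := by
  have htri : tri a 0 = 0 := left_eq_add.mp <| by simpa only [add_zero] using hL1 a 0 0
  have hcirc : circ a 0 = 0 := left_eq_add.mp <| by simpa only [add_zero] using hdistrib a 0 0
  rw [← hcirc, hcircL, htri, add_zero]

theorem twoSided_ring_iff_general {G : Type*} [AddCommGroup G]
    (tri tril : G → G → G) (phi : G → G) (circ : G → G → G)
    (hcircL : ∀ a b : G, circ a b = phi a + tri a b)
    (hcircR : ∀ a b : G, circ a b = tril a b + phi b)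
    (hL1 : ∀ a b c : G, tri a (b + c) = tri a b + tri a c)
    (hL2 : ∀ a b c : G, tri (circ a b) c = tri a (tri b c))
    (hR1 : ∀ a b c : G, tril (a + b) c = tril a c + tril b c) :
    ((∀ a b c : G, circ (circ a b) c = circ a (circ b c)) ∧
     (∀ a b c : G, circ a (b + c) = circ a b + circ a c) ∧
     (∀ a b c : G, circ (a + b) c = circ a c + circ b c)) ↔
    (∀ a : G, phi a = 0) := by
  refine ⟨fun ⟨_, hdistrib, _⟩ => phi_eq_zero_of_circ_left_distrib hcircL hL1 hdistrib, ?_⟩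
  intro hphi
  obtain rfl : circ = tri := by
    funext a b
    rw [hcircL, hphi, zero_add]
  obtain rfl : tril = circ := by
    funext a b
    rw [hcircR, hphi, add_zero]
  exact ⟨hL2, hL1, hR1⟩

/-- For an abelian two-sided weak twisted post group `(G, +, ▷, ◁, Φ)` with
sub-adjacent operation `∘`, `(G, +, ∘)` is a nonunital ring iff `Φ` is trivial. -/
theorem twoSided_ring_iff {G : Type*} [AddCommGroup G]
    (tri tril : G → G → G) (phi : G → G) (circ : G → G → G)
    (hcircL : ∀ a b : G, circ a b = phi a + tri a b)
    (hcircR : ∀ a b : G, circ a b = tril a b + phi b)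
    (hL1 : ∀ a b c : G, tri a (b + c) = tri a b + tri a c)
    (hL2 : ∀ a b c : G, tri (circ a b) c = tri a (tri b c))
    (hL3 : ∀ a b : G, phi (circ a b) = circ a (phi b))
    (hR1 : ∀ a b c : G, tril (a + b) c = tril a c + tril b c)
    (hR2 : ∀ a b c : G, tril a (circ b c) = tril (tril a b) c)
    (hR3 : ∀ a b : G, phi (circ a b) = circ (phi a) b) :
    ((∀ a b c : G, circ (circ a b) c = circ a (circ b c)) ∧
     (∀ a b c : G, circ a (b + c) = circ a b + circ a c) ∧
     (∀ a b c : G, circ (a + b) c = circ a c + circ b c)) ↔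
    (∀ a : G, phi a = 0) :=
  twoSided_ring_iff_general tri tril phi circ hcircL hcircR hL1 hL2 hR1
end
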